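/- Base change move BC1: If (α_n)_{n≥0}, (β_n)_{n≥0} form a Bailey pair with respect to base a, where a q^m ≠ 1 for all m ≥ 0, then the sequences β'_n = Σ_{j=0}^{n} (a^j q^{j²−j} / (q;q)_{n−j}) β_j and α'_n defined by α'_0 = α_0 and, for n ≥ 1, α'_n = a^n q^{n²−n} (α̃_n − a q^{2n−2} α̃_{n−1}), form a Bailey pair with respect to base a q^{−1}, where α̃_n = ((1 − a)/(1 − a q^{2n})) α_n. -/

import Mathlib

open Finset

noncomputable def qPoch (a q : ℂ) (n : ℕ) : ℂ :=
  ∏ t ∈ Finset.range n, (1 - a * q ^ t)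

noncomputable def qPochInf (a q : ℂ) : ℂ :=
  ∏' t : ℕ, (1 - a * q ^ t)

def IsBaileyPair (q a : ℂ) (α β : ℕ → ℂ) : Prop :=
  ∀ n : ℕ, β n =
    ∑ t ∈ Finset.range (n + 1), α t / (qPoch q q (n - t) * qPoch (a * q) q (n + t))

/-!
Inserting the Bailey relation into `β'_n` and exchanging the two sums gives
`β'_n = ∑_s α_s · a^s q^(s²-s) / (aq)_{2s} · K(a q^{2s}, n - s)` with the kernel
`K(b, m) = ∑_{i ≤ m} b^i q^(i²-i) / ((q)_i (q)_{m-i} (bq)_i) = (1 + b - b q^m) / ((q)_m (bq)_m)`.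
The closed form follows by induction on `m` from the q-Pascal split
`1 - q^(m+1) = (1 - q^(m+1-i)) + q^(m+1-i) (1 - q^i)`, whose second part turns `b` into `bq`.
On the other side the sum over `α'` telescopes, so the coefficient of `α_s` is the `α̃_s`-term of
`α'_s` minus the correction carried by `α'_{s+1}`; both coefficients are then the same rational
function of `b = a q^{2s}` and `q^(n-s)`.
-/

section QPochhammer

variable (a q : ℂ)

@[simp]
lemma qPoch_zero : qPoch a q 0 = 1 := by simp [qPoch]

lemma qPoch_succ (n : ℕ) : qPoch a q (n + 1) = qPoch a q n * (1 - a * q ^ n) :=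
  prod_range_succ _ n

lemma qPoch_succ' (n : ℕ) : qPoch a q (n + 1) = (1 - a) * qPoch (a * q) q n := by
  simp only [qPoch, prod_range_succ', pow_zero, mul_one, mul_assoc, ← pow_succ', mul_comm]

lemma qPoch_add (m n : ℕ) : qPoch a q (m + n) = qPoch a q m * qPoch (a * q ^ m) q n := by
  simp only [qPoch, prod_range_add, mul_assoc, ← pow_add]

variable {a q}

lemma qPoch_mul_eq_div (ha : a ≠ 1) (n : ℕ) :
    qPoch (a * q) q n = qPoch a q n * (1 - a * q ^ n) / (1 - a) := by
  rw [eq_div_iff (sub_ne_zero.mpr ha.symm), ← qPoch_succ, qPoch_succ', mul_comm]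

end QPochhammer

lemma pow_ne_one_of_norm_lt_one {𝕜 : Type*} [NormedDivisionRing 𝕜] {q : 𝕜} (hq : ‖q‖ < 1)
    {k : ℕ} (hk : k ≠ 0) : q ^ k ≠ 1 := fun h =>
  (pow_lt_one₀ (norm_nonneg q) hq hk).ne (by rw [← norm_pow, h, norm_one])

lemma Nat.add_sq_sub_add (s i : ℕ) :
    (s + i) ^ 2 - (s + i) = (s ^ 2 - s) + (i ^ 2 - i) + 2 * s * i := by
  have := Nat.le_self_pow two_ne_zero s
  have := Nat.le_self_pow two_ne_zero i
  have := Nat.le_self_pow two_ne_zero (s + i)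
  zify [*]
  ring

noncomputable def baseChangeKernel (b q : ℂ) (m : ℕ) : ℂ :=
  ∑ i ∈ range (m + 1),
    b ^ i * q ^ (i ^ 2 - i) / (qPoch q q i * qPoch q q (m - i) * qPoch (b * q) q i)

@[simp]
lemma baseChangeKernel_zero (b q : ℂ) : baseChangeKernel b q 0 = 1 := by simp [baseChangeKernel]

section Kernel

variable {q : ℂ} (hq : ∀ k, q ^ (k + 1) ≠ 1)
include hq

lemma baseChangeKernel_succ (b : ℂ) (m : ℕ) :
    (1 - q ^ (m + 1)) * baseChangeKernel b q (m + 1) =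
      baseChangeKernel b q m + b * q ^ m / (1 - b * q) * baseChangeKernel (b * q) q m := by
  set t : ℕ → ℂ := fun i =>
    b ^ i * q ^ (i ^ 2 - i) / (qPoch q q i * qPoch q q (m + 1 - i) * qPoch (b * q) q i)
  have hsplit : ∀ i ∈ range (m + 2), (1 - q ^ (m + 1)) * t i
      = (1 - q ^ (m + 1 - i)) * t i + q ^ (m + 1 - i) * (1 - q ^ i) * t i := by
    intro i hi
    have hpow : q ^ (m + 1 - i) * q ^ i = q ^ (m + 1) := by
      rw [← pow_add, Nat.sub_add_cancel (by simpa [Nat.lt_succ_iff] using hi)]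
    linear_combination t i * hpow
  have hlow : ∑ i ∈ range (m + 2), (1 - q ^ (m + 1 - i)) * t i = baseChangeKernel b q m := by
    rw [sum_range_succ, Nat.sub_self, pow_zero, sub_self, zero_mul, add_zero]
    refine sum_congr rfl fun i hi => ?_
    have hi : m + 1 - i = m - i + 1 := by have := mem_range.mp hi; omega
    have hne : 1 - q ^ (m - i + 1) ≠ 0 := sub_ne_zero.mpr (hq _).symm
    simp only [t, hi, qPoch_succ q q (m - i), ← pow_succ']
    field_simp
  have hhigh : ∑ i ∈ range (m + 2), q ^ (m + 1 - i) * (1 - q ^ i) * t i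
      = b * q ^ m / (1 - b * q) * baseChangeKernel (b * q) q m := by
    rw [sum_range_succ', pow_zero, sub_self, mul_zero, zero_mul, add_zero, baseChangeKernel,
      mul_sum]
    refine sum_congr rfl fun j hj => ?_
    have hjm : j ≤ m := by have := mem_range.mp hj; omega
    have hj : m + 1 - (j + 1) = m - j := by omega
    have hm : q ^ m = q ^ (m - j) * q ^ j := by rw [← pow_add, Nat.sub_add_cancel hjm]
    have hne : 1 - q ^ (j + 1) ≠ 0 := sub_ne_zero.mpr (hq _).symm
    simp only [t, hj, Nat.add_sq_sub_add, qPoch_succ q q j, qPoch_succ' (b * q) q j, ← pow_succ',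
      hm]
    field_simp
    ring
  rw [baseChangeKernel, mul_sum, sum_congr rfl hsplit, sum_add_distrib, hlow, hhigh]

lemma baseChangeKernel_eq {b : ℂ} (hb : ∀ k, b * q ^ (k + 1) ≠ 1) (m : ℕ) :
    baseChangeKernel b q m = (1 + b - b * q ^ m) / (qPoch q q m * qPoch (b * q) q m) := by
  induction m generalizing b with
  | zero => simp
  | succ m ih =>
    have hbq : ∀ k, b * q * q ^ (k + 1) ≠ 1 := fun k => by
      rw [mul_assoc, ← pow_succ']; exact hb (k + 1)
    have h1 : 1 - q ^ (m + 1) ≠ 0 := sub_ne_zero.mpr (hq m).symm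
    have h2 : b * q ≠ 1 := by simpa using hb 0
    have h3 : 1 - b * q ^ (m + 1) ≠ 0 := sub_ne_zero.mpr (hb m).symm
    have hrec := baseChangeKernel_succ hq b m
    rw [ih hb, ih hbq] at hrec
    rw [eq_div_of_mul_eq h1 ((mul_comm _ _).trans hrec), qPoch_succ q q m,
      qPoch_succ (b * q) q m, qPoch_mul_eq_div h2]
    simp only [mul_assoc, ← pow_succ']
    field_simp
    ring

end Kernel

lemma IsBaileyPair.sum_mul_beta {q a : ℂ} {α β : ℕ → ℂ} (h : IsBaileyPair q a α β)
    (w : ℕ → ℂ) (n : ℕ) :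
    ∑ j ∈ range (n + 1), w j * β j =
      ∑ s ∈ range (n + 1), α s *
        ∑ i ∈ range (n + 1 - s), w (s + i) / (qPoch q q i * qPoch (a * q) q (2 * s + i)) := by
  simp only [mul_sum]
  rw [← sum_range_diag_flip]
  refine sum_congr rfl fun j _ => ?_
  rw [h j, mul_sum]
  refine sum_congr rfl fun s hs => ?_
  have hs : s ≤ j := Nat.lt_succ_iff.mp (mem_range.mp hs)
  rw [Nat.add_sub_cancel' hs, show 2 * s + (j - s) = j + s by omega]
  ring

lemma sum_baseChangeWeight (a q : ℂ) {s n : ℕ} (hs : s ≤ n) :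
    ∑ i ∈ range (n + 1 - s), a ^ (s + i) * q ^ ((s + i) ^ 2 - (s + i)) /
        qPoch q q (n - (s + i)) / (qPoch q q i * qPoch (a * q) q (2 * s + i)) =
      a ^ s * q ^ (s ^ 2 - s) / qPoch (a * q) q (2 * s) *
        baseChangeKernel (a * q ^ (2 * s)) q (n - s) := by
  rw [show n + 1 - s = n - s + 1 by omega, baseChangeKernel, mul_sum]
  refine sum_congr rfl fun i _ => ?_
  rw [Nat.add_sq_sub_add, qPoch_add, show n - (s + i) = n - s - i by omega,
    show a * q * q ^ (2 * s) = a * q ^ (2 * s) * q by ring]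
  ring

lemma baseChangeCoeff_self {a : ℂ} (q : ℂ) (ha : a ≠ 1) (n : ℕ) :
    a ^ n * q ^ (n ^ 2 - n) / qPoch (a * q) q (2 * n) *
        baseChangeKernel (a * q ^ (2 * n)) q (n - n) =
      a ^ n * q ^ (n ^ 2 - n) * ((1 - a) / (1 - a * q ^ (2 * n))) /
        (qPoch q q (n - n) * qPoch a q (n + n)) := by
  rw [qPoch_mul_eq_div ha, Nat.sub_self, baseChangeKernel_zero, qPoch_zero, ← two_mul]
  field_simp

lemma baseChangeCoeff_of_lt {a q : ℂ} (ha : ∀ k, a * q ^ k ≠ 1) (hq : ∀ k, q ^ (k + 1) ≠ 1)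
    {s n : ℕ} (hsn : s < n) :
    a ^ s * q ^ (s ^ 2 - s) / qPoch (a * q) q (2 * s) *
        baseChangeKernel (a * q ^ (2 * s)) q (n - s) =
      a ^ s * q ^ (s ^ 2 - s) * ((1 - a) / (1 - a * q ^ (2 * s))) /
          (qPoch q q (n - s) * qPoch a q (n + s)) -
        a ^ (s + 1) * q ^ ((s + 1) ^ 2 - (s + 1)) *
            (a * q ^ (2 * s) * ((1 - a) / (1 - a * q ^ (2 * s)))) /
          (qPoch q q (n - (s + 1)) * qPoch a q (n + (s + 1))) := by
  obtain ⟨m, rfl⟩ := Nat.exists_eq_add_of_lt hsn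
  obtain ⟨b, hb⟩ : ∃ b, a * q ^ (2 * s) = b := ⟨_, rfl⟩
  have hbk : ∀ k, b * q ^ k ≠ 1 := fun k => by rw [← hb, mul_assoc, ← pow_add]; exact ha _
  have hcoef : a ^ (s + 1) * q ^ ((s + 1) ^ 2 - (s + 1)) = a ^ s * q ^ (s ^ 2 - s) * b := by
    rw [Nat.add_sq_sub_add s 1, ← hb]
    ring
  rw [show s + m + 1 - s = m + 1 by omega, show s + m + 1 - (s + 1) = m by omega,
    show s + m + 1 + s = 2 * s + (m + 1) by omega,
    show s + m + 1 + (s + 1) = 2 * s + (m + 1 + 1) by omega,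
    qPoch_add a q (2 * s), qPoch_add a q (2 * s), hb,
    baseChangeKernel_eq hq (fun k => hbk (k + 1)), qPoch_succ q q m, qPoch_succ b q (m + 1),
    qPoch_mul_eq_div (by simpa using ha 0), hb, qPoch_mul_eq_div (by simpa using hbk 0), hcoef]
  have h1 : 1 - q * q ^ m ≠ 0 := sub_ne_zero.mpr (by rw [← pow_succ']; exact (hq m).symm)
  have h2 : 1 - b * q ^ (m + 1) ≠ 0 := sub_ne_zero.mpr (hbk _).symm
  field_simp
  ring

lemma sum_range_succ_eq_of_telescope {f g h : ℕ → ℂ} (h0 : f 0 = g 0)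
    (hsucc : ∀ t, f (t + 1) = g (t + 1) - h t) (n : ℕ) :
    ∑ t ∈ range (n + 1), f t = ∑ t ∈ range n, (g t - h t) + g n := by
  rw [sum_range_succ', sum_congr rfl fun t _ => hsucc t, sum_sub_distrib, sum_sub_distrib, h0]
  linear_combination (sum_range_succ' g n).symm.trans (sum_range_succ g n)

theorem base_change_BC1 (q a : ℂ) (hq0 : 0 < ‖q‖) (hq1 : ‖q‖ < 1)
    (ha : ∀ m : ℕ, a * q ^ m ≠ 1)
    (α β : ℕ → ℂ) (h : IsBaileyPair q a α β) :
    IsBaileyPair q (a * q⁻¹)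
      (fun n => match n with
        | 0 => α 0
        | m + 1 => a ^ (m + 1) * q ^ ((m + 1) ^ 2 - (m + 1)) *
            ((1 - a) / (1 - a * q ^ (2 * (m + 1))) * α (m + 1) -
              a * q ^ (2 * m) * ((1 - a) / (1 - a * q ^ (2 * m)) * α m)))
      (fun n => ∑ j ∈ Finset.range (n + 1),
        a ^ j * q ^ (j ^ 2 - j) / qPoch q q (n - j) * β j) := by
  have hq : ∀ k, q ^ (k + 1) ≠ 1 := fun k => pow_ne_one_of_norm_lt_one hq1 k.succ_ne_zero
  have ha1 : a ≠ 1 := by simpa using ha 0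
  intro n
  beta_reduce
  rw [inv_mul_cancel_right₀ (norm_pos_iff.mp hq0),
    h.sum_mul_beta (fun j => a ^ j * q ^ (j ^ 2 - j) / qPoch q q (n - j)),
    sum_congr rfl fun s hs => by
      rw [sum_baseChangeWeight a q (Nat.lt_succ_iff.mp (mem_range.mp hs))],
    sum_range_succ]
  conv_rhs =>
    rw [sum_range_succ_eq_of_telescope
      (g := fun s => a ^ s * q ^ (s ^ 2 - s) * ((1 - a) / (1 - a * q ^ (2 * s)) * α s) /
        (qPoch q q (n - s) * qPoch a q (n + s)))
      (h := fun s => a ^ (s + 1) * q ^ ((s + 1) ^ 2 - (s + 1)) *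
        (a * q ^ (2 * s) * ((1 - a) / (1 - a * q ^ (2 * s)) * α s)) /
          (qPoch q q (n - (s + 1)) * qPoch a q (n + (s + 1))))
      (by simp [sub_ne_zero.mpr ha1.symm]) (fun t => by simp only [mul_sub, sub_div]) n]
  congr 1
  · refine sum_congr rfl fun s hs => ?_
    rw [baseChangeCoeff_of_lt ha hq (mem_range.mp hs)]
    ring
  · rw [baseChangeCoeff_self q ha1]
    ring
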